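/- Integration-by-parts revenue bound (key step in the optimal-mechanism characterization): Let a < b be reals, let h : [a, b] → ℝ be continuously differentiable, nondecreasing, and satisfy h(b) = 0, let c : [a, b] → ℝ be continuously differentiable, let u ∈ ℝ, and let G : [a, b] → ℝ be continuously differentiable with G(a) = 0 and G(θ) ≥ c(θ) − u for all θ ∈ [a, b]. Then ∫_a^b h(θ)·G'(θ) dθ ≤ h(a)·(c(a) − u) + ∫_a^b h(θ)·c'(θ) dθ. -/

import Mathlib

open MeasureTheory intervalIntegral Set

/-- Integration by parts against a nonnegative `v`: the correction term `∫ u' v` is nonnegative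
because a monotone `u` has nonnegative derivative. -/
theorem integral_mul_deriv_le_of_monotoneOn {a b : ℝ} (hab : a < b) {u u' v v' : ℝ → ℝ}
    (hu : ∀ x ∈ Icc a b, HasDerivWithinAt u (u' x) (Icc a b) x)
    (hv : ∀ x ∈ Icc a b, HasDerivWithinAt v (v' x) (Icc a b) x)
    (hu' : IntervalIntegrable u' volume a b) (hv' : IntervalIntegrable v' volume a b)
    (hmono : MonotoneOn u (Icc a b)) (hv_nonneg : ∀ x ∈ Icc a b, 0 ≤ v x) :
    ∫ x in a..b, u x * v' x ≤ u b * v b - u a * v a := by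
  have hu'_nonneg : ∀ x ∈ Icc a b, 0 ≤ u' x := fun x hx =>
    (hu x hx).derivWithin (uniqueDiffOn_Icc hab x hx) ▸ hmono.derivWithin_nonneg
  rw [← uIcc_of_le hab.le] at hu hv
  have hparts := integral_mul_deriv_eq_deriv_mul_of_hasDerivWithinAt hu hv hu' hv'
  have hcorrection : 0 ≤ ∫ x in a..b, u' x * v x := integral_nonneg hab.le fun x hx =>
    mul_nonneg (hu'_nonneg x hx) (hv_nonneg x hx)
  linarith

/-- Integration-by-parts revenue bound: for a nondecreasing continuously
differentiable `h` vanishing at `b`, a continuously differentiable `c`, and a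
continuously differentiable `G` with `G a = 0` satisfying the pointwise
constraint `G ≥ c − u`, the integral `∫ h·G'` is at most
`h a·(c a − u) + ∫ h·c'`. -/
theorem integration_by_parts_revenue_bound
    (a b : ℝ) (hab : a < b)
    (h h' c c' G G' : ℝ → ℝ) (u : ℝ)
    (hh : ∀ θ ∈ Icc a b, HasDerivWithinAt h (h' θ) (Icc a b) θ)
    (hh'cont : ContinuousOn h' (Icc a b))
    (hhmono : MonotoneOn h (Icc a b))
    (hhb : h b = 0)
    (hc : ∀ θ ∈ Icc a b, HasDerivWithinAt c (c' θ) (Icc a b) θ)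
    (hc'cont : ContinuousOn c' (Icc a b))
    (hG : ∀ θ ∈ Icc a b, HasDerivWithinAt G (G' θ) (Icc a b) θ)
    (hG'cont : ContinuousOn G' (Icc a b))
    (hGa : G a = 0)
    (hGc : ∀ θ ∈ Icc a b, c θ - u ≤ G θ) :
    (∫ θ in a..b, h θ * G' θ)
      ≤ h a * (c a - u) + (∫ θ in a..b, h θ * c' θ) := by
  have hh_cont : ContinuousOn h (Icc a b) := fun θ hθ => (hh θ hθ).continuousWithinAt
  have hslack := integral_mul_deriv_le_of_monotoneOn hab hh
    (fun θ hθ => (hG θ hθ).sub ((hc θ hθ).sub_const u))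
    (hh'cont.intervalIntegrable_of_Icc hab.le)
    ((hG'cont.sub hc'cont).intervalIntegrable_of_Icc hab.le)
    hhmono (fun θ hθ => sub_nonneg.2 (hGc θ hθ))
  have hsplit : ∫ θ in a..b, h θ * (G' θ - c' θ)
      = (∫ θ in a..b, h θ * G' θ) - ∫ θ in a..b, h θ * c' θ := by
    simp_rw [mul_sub]
    exact integral_sub ((hh_cont.mul hG'cont).intervalIntegrable_of_Icc hab.le)
      ((hh_cont.mul hc'cont).intervalIntegrable_of_Icc hab.le)
  rw [hsplit] at hslack
  simp only [Pi.sub_apply, hhb, hGa, zero_mul] at hslack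
  linarith
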